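/- arXiv:2503.12082 — 5 statements merged into one kernel-verified Lean document; each statement's English description precedes it below -/
import Mathlib

section
/- Let g ≥ 1 be an integer and B a symmetric g×g complex matrix whose imaginary part is positive definite. Then for all m, n ∈ ℤ^g and all z ∈ ℂ^g, the theta function satisfies the quasi-periodicity relation θ(z + m + Bn; B) = exp(−iπ n·Bn − 2iπ n·z) · θ(z; B). -/
open Complex

/-- The general term of the multidimensional theta series. -/
noncomputable def thetaTerm (g : ℕ) (B : Matrix (Fin g) (Fin g) ℂ)
    (z : Fin g → ℂ) (n : Fin g → ℤ) : ℂ :=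
  Complex.exp ((Real.pi : ℂ) * Complex.I *
    ((∑ i, (n i : ℂ) * ∑ j, B i j * (n j : ℂ)) + 2 * ∑ i, (n i : ℂ) * z i))

/-- The multidimensional theta function `θ(z; B) = Σ_{n ∈ ℤ^g} exp(iπ (n·Bn + 2 n·z))`. -/
noncomputable def theta (g : ℕ) (B : Matrix (Fin g) (Fin g) ℂ) (z : Fin g → ℂ) : ℂ :=
  ∑' n : Fin g → ℤ, thetaTerm g B z n

/-- quasi-periodicity of the theta function:
`θ(z + m + Bn; B) = exp(−iπ n·Bn − 2iπ n·z) · θ(z; B)` for all `m, n ∈ ℤ^g`. -/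
theorem theta_quasi_periodicity (g : ℕ) (hg : 1 ≤ g)
    (B : Matrix (Fin g) (Fin g) ℂ) (hB : B.IsSymm)
    (hBim : (Matrix.of fun i j => (B i j).im).PosDef)
    (m n : Fin g → ℤ) (z : Fin g → ℂ) :
    theta g B (z + (fun i => (m i : ℂ)) + (fun i => ∑ j, B i j * (n j : ℂ)))
      = Complex.exp (-(Real.pi : ℂ) * Complex.I *
            (∑ i, (n i : ℂ) * ∑ j, B i j * (n j : ℂ))
          - 2 * (Real.pi : ℂ) * Complex.I * ∑ i, (n i : ℂ) * z i) * theta g B z := by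
  have hBsym : ∀ k l : Fin g → ℤ,
      (∑ i, (k i : ℂ) * ∑ j, B i j * (l j : ℂ))
        = ∑ i, (l i : ℂ) * ∑ j, B i j * (k j : ℂ) := by
    intro k l
    simp only [Finset.mul_sum]
    rw [Finset.sum_comm]
    refine Finset.sum_congr rfl fun i _ => Finset.sum_congr rfl fun j _ => ?_
    rw [← hB.apply i j]; ring
  have key : ∀ k : Fin g → ℤ,
      thetaTerm g B (z + (fun i => (m i : ℂ)) + (fun i => ∑ j, B i j * (n j : ℂ))) k
        = Complex.exp (-(Real.pi : ℂ) * Complex.I *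
              (∑ i, (n i : ℂ) * ∑ j, B i j * (n j : ℂ))
            - 2 * (Real.pi : ℂ) * Complex.I * ∑ i, (n i : ℂ) * z i)
          * thetaTerm g B z (k + n) := by
    intro k
    unfold thetaTerm
    rw [← Complex.exp_add, Complex.exp_eq_exp_iff_exists_int]
    refine ⟨∑ i, k i * m i, ?_⟩
    have hm : (∑ i, (k i : ℂ) *
          ((z + (fun i => (m i : ℂ)) + (fun i => ∑ j, B i j * (n j : ℂ))) i))
        = (∑ i, (k i : ℂ) * z i) + ((∑ i, k i * m i : ℤ) : ℂ)
          + ∑ i, (k i : ℂ) * ∑ j, B i j * (n j : ℂ) := by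
      push_cast
      rw [← Finset.sum_add_distrib, ← Finset.sum_add_distrib]
      refine Finset.sum_congr rfl fun i _ => ?_
      simp only [Pi.add_apply]; ring
    have hz : (∑ i, (((k + n) i : ℤ) : ℂ) * z i)
        = (∑ i, (k i : ℂ) * z i) + ∑ i, (n i : ℂ) * z i := by
      rw [← Finset.sum_add_distrib]
      refine Finset.sum_congr rfl fun i _ => ?_
      simp only [Pi.add_apply, Int.cast_add]; ring
    have h2 : (∑ i, (((k + n) i : ℤ) : ℂ) * ∑ j, B i j * (((k + n) j : ℤ) : ℂ))
        = (∑ i, (k i : ℂ) * ∑ j, B i j * (k j : ℂ))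
          + 2 * (∑ i, (k i : ℂ) * ∑ j, B i j * (n j : ℂ))
          + (∑ i, (n i : ℂ) * ∑ j, B i j * (n j : ℂ)) := by
      have expand : (∑ i, (((k + n) i : ℤ) : ℂ) * ∑ j, B i j * (((k + n) j : ℤ) : ℂ))
          = (∑ i, (k i : ℂ) * ∑ j, B i j * (k j : ℂ))
            + (∑ i, (k i : ℂ) * ∑ j, B i j * (n j : ℂ))
            + ((∑ i, (n i : ℂ) * ∑ j, B i j * (k j : ℂ))
            + (∑ i, (n i : ℂ) * ∑ j, B i j * (n j : ℂ))) := by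
        rw [← Finset.sum_add_distrib, ← Finset.sum_add_distrib, ← Finset.sum_add_distrib]
        refine Finset.sum_congr rfl fun i _ => ?_
        have hin : (∑ j, B i j * (((k + n) j : ℤ) : ℂ))
            = (∑ j, B i j * (k j : ℂ)) + ∑ j, B i j * (n j : ℂ) := by
          rw [← Finset.sum_add_distrib]
          refine Finset.sum_congr rfl fun j _ => ?_
          simp only [Pi.add_apply, Int.cast_add]; ring
        rw [hin]
        simp only [Pi.add_apply, Int.cast_add]; ring
      rw [expand, hBsym n k]; ring
    rw [hm, hz, h2]
    ring
  unfold theta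
  rw [tsum_congr key, tsum_mul_left]
  congr 1
  exact (Equiv.addRight n).tsum_eq (thetaTerm g B z)
end

section
/- Let g ≥ 1 be an integer and B a symmetric g×g complex matrix whose imaginary part is positive definite. Then for every compact set K ⊆ ℂ^g there exists a summable family (c_n)_{n∈ℤ^g} of nonnegative reals such that |exp(iπ(n·Bn + 2 n·z))| ≤ c_n for all z ∈ K and all n ∈ ℤ^g; i.e., the theta series converges absolutely and uniformly on compact subsets of ℂ^g. -/
open Complex

/-!
Since `|exp w| = exp (Re w)`, only the imaginary parts of `B` and `z` matter. Positive
definiteness and compactness of the unit sphere give `λ > 0` with `n ⬝ Im B ⬝ n ≥ λ ∑ nᵢ²`,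
and `|Im zᵢ| ≤ C` on `K`. So every term is dominated, uniformly on `K`, by
`∏ᵢ exp (-π (λ nᵢ² - 2 C |nᵢ|))`, a product of majorants of the one-variable Jacobi theta
series; each factor is summable over `ℤ`, hence so is the product over `ℤ^g`.
-/

open Matrix Metric Real

theorem exists_pos_mul_norm_sq_le_of_isHomogeneous {E : Type*} [NormedAddCommGroup E]
    [NormedSpace ℝ E] [FiniteDimensional ℝ E] {Q : E → ℝ} (hQ : Continuous Q)
    (hsmul : ∀ (c : ℝ) x, Q (c • x) = c ^ 2 * Q x) (hpos : ∀ x, x ≠ 0 → 0 < Q x) :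
    ∃ lam > 0, ∀ x, lam * ‖x‖ ^ 2 ≤ Q x := by
  have hQ0 : Q 0 = 0 := by simpa using hsmul 0 0
  rcases subsingleton_or_nontrivial E with hE | hE
  · exact ⟨1, one_pos, fun x => by simp [Subsingleton.elim x 0, hQ0]⟩
  obtain ⟨u, hu, hmin⟩ := (isCompact_sphere (0 : E) 1).exists_isMinOn
    (NormedSpace.sphere_nonempty.2 zero_le_one) hQ.continuousOn
  refine ⟨Q u, hpos u (ne_zero_of_mem_unit_sphere ⟨u, hu⟩), fun x => ?_⟩
  rcases eq_or_ne x 0 with rfl | hx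
  · simp [hQ0]
  have hx' : ‖x‖ ≠ 0 := norm_ne_zero_iff.2 hx
  have hunit : ‖x‖⁻¹ • x ∈ sphere (0 : E) 1 := by
    simp [norm_smul, hx']
  calc Q u * ‖x‖ ^ 2 ≤ Q (‖x‖⁻¹ • x) * ‖x‖ ^ 2 := by gcongr; exact hmin hunit
    _ = Q x := by rw [hsmul]; field_simp

theorem Matrix.PosDef.exists_pos_mul_dotProduct_self_le {ι : Type*} [Fintype ι]
    {Y : Matrix ι ι ℝ} (hY : Y.PosDef) :
    ∃ lam > 0, ∀ x : ι → ℝ, lam * (x ⬝ᵥ x) ≤ x ⬝ᵥ Y *ᵥ x := by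
  obtain ⟨lam, hlam, hle⟩ := exists_pos_mul_norm_sq_le_of_isHomogeneous
    (E := EuclideanSpace ℝ ι) (Q := fun x => x.ofLp ⬝ᵥ Y *ᵥ x.ofLp) (by fun_prop)
    (fun c x => by simp [mulVec_smul]; ring)
    (fun x hx => Matrix.posDef_iff_dotProduct_mulVec.1 hY |>.2 (by simpa using hx))
  refine ⟨lam, hlam, fun x => ?_⟩
  have hx := hle (WithLp.toLp 2 x)
  rw [EuclideanSpace.norm_sq_eq] at hx
  simpa [dotProduct, sq] using hx

theorem summable_fin_pi_prod_of_nonneg {α : Type*} {f : α → ℝ} (hf0 : 0 ≤ f)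
    (hf : Summable f) (g : ℕ) : Summable fun n : Fin g → α => ∏ i, f (n i) := by
  induction g with
  | zero => exact .of_finite
  | succ g ih =>
    have hprod : Summable fun p : α × (Fin g → α) => f p.1 * ∏ i, f (p.2 i) :=
      Summable.mul_of_nonneg (f := f) (g := fun n : Fin g → α => ∏ i, f (n i)) hf ih hf0
        fun n => Finset.prod_nonneg fun i _ => hf0 _
    refine (Fin.consEquiv fun _ => α).summable_iff.1 ?_
    simpa [Function.comp_def, Fin.prod_univ_succ, Fin.consEquiv] using hprod

theorem abs_dotProduct_im_le {ι : Type*} [Fintype ι] (x : ι → ℝ) (z : ι → ℂ) :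
    |x ⬝ᵥ fun i => (z i).im| ≤ ‖z‖ * ∑ i, |x i| :=
  calc |x ⬝ᵥ fun i => (z i).im| ≤ ∑ i, |x i * (z i).im| := Finset.abs_sum_le_sum_abs _ _
    _ ≤ ∑ i, ‖z‖ * |x i| := Finset.sum_le_sum fun i _ => by
        rw [abs_mul, mul_comm]
        gcongr
        exact (abs_im_le_norm _).trans (norm_le_pi_norm z i)
    _ = ‖z‖ * ∑ i, |x i| := (Finset.mul_sum ..).symm

theorem norm_thetaTerm (g : ℕ) (B : Matrix (Fin g) (Fin g) ℂ) (z : Fin g → ℂ)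
    (n : Fin g → ℤ) :
    ‖thetaTerm g B z n‖ = Real.exp (-π * ((fun i => (n i : ℝ)) ⬝ᵥ
      (of fun i j => (B i j).im) *ᵥ (fun i => (n i : ℝ)) +
        2 * (fun i => (n i : ℝ)) ⬝ᵥ fun i => (z i).im)) := by
  simp [thetaTerm, Complex.norm_exp, Complex.mul_re, Complex.mul_im, Complex.im_sum,
    Complex.re_sum, Finset.mul_sum, dotProduct, mulVec]

theorem norm_thetaTerm_le_prod {g : ℕ} {B : Matrix (Fin g) (Fin g) ℂ} {z : Fin g → ℂ}
    {n : Fin g → ℤ} {lam C : ℝ}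
    (hquad : ∀ x : Fin g → ℝ, lam * (x ⬝ᵥ x) ≤ x ⬝ᵥ (of fun i j => (B i j).im) *ᵥ x)
    (hz : ‖z‖ ≤ C) :
    ‖thetaTerm g B z n‖ ≤ ∏ i, Real.exp (-π * (lam * (n i : ℝ) ^ 2 - 2 * C * |(n i : ℝ)|)) := by
  have hquad_n := hquad fun i => (n i : ℝ)
  have hsq : ((fun i => (n i : ℝ)) ⬝ᵥ fun i => (n i : ℝ)) = ∑ i, (n i : ℝ) ^ 2 := by
    simp [dotProduct, sq]
  rw [hsq] at hquad_n
  have hlin := (abs_le.1 (abs_dotProduct_im_le (fun i => (n i : ℝ)) z)).1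
  have hC : ‖z‖ * ∑ i, |(n i : ℝ)| ≤ C * ∑ i, |(n i : ℝ)| := by gcongr
  rw [norm_thetaTerm, ← Real.exp_sum, Real.exp_le_exp, ← Finset.mul_sum, Finset.sum_sub_distrib,
    ← Finset.mul_sum, ← Finset.mul_sum, neg_mul, neg_mul, neg_le_neg_iff]
  gcongr
  linarith

theorem theta_series_uniform_summable_on_compacts_general (g : ℕ)
    (B : Matrix (Fin g) (Fin g) ℂ)
    (hBim : (Matrix.of fun i j => (B i j).im).PosDef)
    (K : Set (Fin g → ℂ)) (hK : IsCompact K) :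
    ∃ c : (Fin g → ℤ) → ℝ, Summable c ∧ (∀ n, 0 ≤ c n) ∧
      ∀ z ∈ K, ∀ n : Fin g → ℤ, ‖thetaTerm g B z n‖ ≤ c n := by
  obtain ⟨lam, hlam, hquad⟩ := hBim.exists_pos_mul_dotProduct_self_le
  obtain ⟨C, hC⟩ := hK.isBounded.exists_norm_le
  have hjacobi :
      Summable fun m : ℤ => Real.exp (-π * (lam * (m : ℝ) ^ 2 - 2 * C * |(m : ℝ)|)) := by
    simpa using summable_pow_mul_jacobiTheta₂_term_bound C hlam 0
  exact ⟨fun n => ∏ i, Real.exp (-π * (lam * (n i : ℝ) ^ 2 - 2 * C * |(n i : ℝ)|)),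
    summable_fin_pi_prod_of_nonneg (fun _ => (Real.exp_pos _).le) hjacobi g,
    fun n => Finset.prod_nonneg fun _ _ => (Real.exp_pos _).le,
    fun z hz _ => norm_thetaTerm_le_prod hquad (hC z hz)⟩

/-- the theta series converges absolutely and uniformly on compact subsets
of `ℂ^g`: for every compact `K ⊆ ℂ^g` there is a summable family of nonnegative reals
dominating the terms of the series uniformly over `K`. -/
theorem theta_series_uniform_summable_on_compacts (g : ℕ) (hg : 1 ≤ g)
    (B : Matrix (Fin g) (Fin g) ℂ) (hB : B.IsSymm)
    (hBim : (Matrix.of fun i j => (B i j).im).PosDef)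
    (K : Set (Fin g → ℂ)) (hK : IsCompact K) :
    ∃ c : (Fin g → ℤ) → ℝ, Summable c ∧ (∀ n, 0 ≤ c n) ∧
      ∀ z ∈ K, ∀ n : Fin g → ℤ, ‖thetaTerm g B z n‖ ≤ c n :=
  theta_series_uniform_summable_on_compacts_general g B hBim K hK
end

section
/- Let R be a commutative ring, K ≥ 1 an integer, and A a K×K matrix over R with zero diagonal (A_{ii} = 0 for all i). Then det A = Σ_π Π_{B ∈ π} ( (−1)^{|B|+1} Σ_σ Π_{i ∈ B} A_{i, σ(i)} ), where the outer sum is over all set partitions π of {1,…,K} all of whose blocks have at least two elements, and for each block B the inner sum is over all permutations σ of B that are cyclic on B. -/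
/-!
With zero diagonal, only fixed-point-free permutations survive in the Leibniz expansion of `det A`.
Such a permutation is the product of its cycle factors, whose supports partition the index set
into blocks of size at least two, and both its sign and its monomial factor over the cycles: a
cycle `c` contributes `(-1) ^ (#c.support + 1) * ∏ i ∈ c.support, A i (c i)`. Conversely, one
cycle chosen on each block of such a partition multiplies to a unique fixed-point-free
permutation, so expanding the product over the blocks of the sums over cycles recovers exactly
these terms.
-/

open scoped Classical

open Equiv Finset Matrix Equiv.Perm

namespace Finset
variable {ι κ : Type*} [DecidableEq ι]

def transversals (f : κ → ι) (T : Finset κ) (P : Finset ι) : Finset (Finset κ) :=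
  T.powerset.filter fun C => Set.InjOn f ↑C ∧ C.image f = P

variable {f : κ → ι} {T : Finset κ} {P : Finset ι}

theorem mem_transversals {C : Finset κ} :
    C ∈ transversals f T P ↔ C ⊆ T ∧ Set.InjOn f ↑C ∧ C.image f = P := by
  rw [transversals, mem_filter, mem_powerset]

theorem transversals_empty : transversals f T ∅ = {∅} := by
  ext C
  simp only [mem_transversals, image_eq_empty, mem_singleton]
  constructor
  · exact fun h => h.2.2
  · rintro rfl
    simp

theorem notMem_of_mem_transversals {B : ι} (hB : B ∉ P) {c : κ} (hc : f c = B) {C : Finset κ}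
    (hC : C ∈ transversals f T P) : c ∉ C := fun h =>
  hB ((mem_transversals.mp hC).2.2 ▸ hc ▸ mem_image_of_mem f h)

variable [DecidableEq κ]

theorem sum_transversals_insert {N : Type*} [AddCommMonoid N] {B : ι} (hB : B ∉ P)
    (h : Finset κ → N) :
    ∑ x ∈ T.filter (f · = B) ×ˢ transversals f T P, h (insert x.1 x.2) =
      ∑ C ∈ transversals f T (insert B P), h C := by
  refine sum_nbij (fun x => insert x.1 x.2) ?_ ?_ ?_ fun _ _ => rfl
  · rintro ⟨c, C⟩ hx
    obtain ⟨hc, hC⟩ : c ∈ _ ∧ C ∈ _ := mem_product.mp hx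
    obtain ⟨hcT, hcB⟩ := mem_filter.mp hc
    obtain ⟨hCT, hinj, himg⟩ := mem_transversals.mp hC
    refine mem_transversals.mpr ⟨insert_subset hcT hCT, ?_, by rw [image_insert, hcB, himg]⟩
    rw [coe_insert, Set.injOn_insert (notMem_of_mem_transversals hB hcB hC), ← coe_image, himg,
      hcB]
    exact ⟨hinj, hB⟩
  · rintro ⟨c, C⟩ hx ⟨c', C'⟩ hx' (heq : insert c C = insert c' C')
    obtain ⟨hc, hC⟩ : c ∈ _ ∧ C ∈ _ := mem_product.mp hx
    obtain ⟨hc', hC'⟩ : c' ∈ _ ∧ C' ∈ _ := mem_product.mp hx'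
    have hcC := notMem_of_mem_transversals hB (mem_filter.mp hc).2 hC
    have hcC' := notMem_of_mem_transversals hB (mem_filter.mp hc).2 hC'
    have hc'C' := notMem_of_mem_transversals hB (mem_filter.mp hc').2 hC'
    obtain rfl : c = c' :=
      (mem_insert.mp (heq ▸ mem_insert_self c C : c ∈ insert c' C')).resolve_right hcC'
    rw [Prod.mk.injEq, ← erase_insert hcC, heq, erase_insert hc'C']
    exact ⟨rfl, rfl⟩
  · intro C' hC'
    obtain ⟨hT, hinj, himg⟩ := mem_transversals.mp hC'
    obtain ⟨c, hc, rfl⟩ : ∃ c ∈ C', f c = B := mem_image.mp (himg ▸ mem_insert_self B P)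
    have hcC' : f c ∉ (C'.erase c).image f := by
      rw [mem_image]
      rintro ⟨d, hd, hfd⟩
      exact ne_of_mem_erase hd (hinj (mem_erase.mp hd).2 hc hfd)
    refine ⟨(c, C'.erase c), mem_product.mpr ⟨mem_filter.mpr ⟨hT hc, rfl⟩, ?_⟩,
      insert_erase hc⟩
    refine mem_transversals.mpr ⟨(erase_subset c C').trans hT, hinj.mono (by simp), ?_⟩
    rw [← erase_insert hcC', ← image_insert, insert_erase hc, himg, erase_insert hB]

variable {M : Type*} [CommSemiring M]

theorem prod_sum_filter_eq_sum_transversals (f : κ → ι) (T : Finset κ) (g : κ → M)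
    (P : Finset ι) :
    ∏ B ∈ P, ∑ c ∈ T with f c = B, g c =
      ∑ C ∈ transversals f T P, ∏ c ∈ C, g c := by
  induction P using Finset.induction_on with
  | empty => rw [transversals_empty, sum_singleton, prod_empty, prod_empty]
  | insert B P hB ih =>
    rw [prod_insert hB, ih, sum_mul_sum, ← sum_product', ← sum_transversals_insert hB]
    refine sum_congr rfl fun x hx => ?_
    obtain ⟨hc, hC⟩ := mem_product.mp hx
    rw [prod_insert (notMem_of_mem_transversals hB (mem_filter.mp hc).2 hC)]

theorem sum_prod_sum_filter_eq_sum_powerset_injOn (f : κ → ι) (T : Finset κ) (g : κ → M)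
    (S : Finset (Finset ι)) :
    ∑ P ∈ S, ∏ B ∈ P, ∑ c ∈ T with f c = B, g c =
      ∑ C ∈ T.powerset.filter (fun C : Finset κ => Set.InjOn f ↑C ∧ C.image f ∈ S),
        ∏ c ∈ C, g c := by
  rw [← sum_fiberwise_of_maps_to (g := fun C : Finset κ => C.image f) (t := S)
    (fun C hC => (mem_filter.mp hC).2.2)]
  refine sum_congr rfl fun P hP => ?_
  rw [prod_sum_filter_eq_sum_transversals, transversals, filter_filter]
  refine sum_congr (filter_congr fun C _ => ?_) fun _ _ => rfl
  constructor
  · rintro ⟨hinj, rfl⟩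
    exact ⟨⟨hinj, hP⟩, rfl⟩
  · rintro ⟨⟨hinj, -⟩, rfl⟩
    exact ⟨hinj, rfl⟩

end Finset

namespace Equiv.Perm
variable {α : Type*} [Fintype α] [DecidableEq α]

theorem support_eq_biUnion_cycleFactorsFinset (σ : Perm α) :
    σ.support = σ.cycleFactorsFinset.biUnion support := by
  conv_lhs => rw [← cycleFactorsFinset_noncommProd σ]
  exact support_noncommProd (cycleFactorsFinset_pairwise_disjoint σ)

theorem sign_eq_prod_cycleFactorsFinset (σ : Perm α) :
    sign σ = ∏ c ∈ σ.cycleFactorsFinset, sign c := by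
  conv_lhs => rw [← cycleFactorsFinset_noncommProd σ]
  rw [map_noncommProd, noncommProd_eq_prod]
  rfl

theorem prod_support_eq_prod_cycleFactorsFinset {M : Type*} [CommMonoid M] (σ : Perm α)
    (F : α → α → M) :
    ∏ i ∈ σ.support, F i (σ i) =
      ∏ c ∈ σ.cycleFactorsFinset, ∏ i ∈ c.support, F i (c i) := by
  rw [support_eq_biUnion_cycleFactorsFinset, prod_biUnion]
  · refine prod_congr rfl fun c hc => prod_congr rfl fun i hi => ?_
    rw [(mem_cycleFactorsFinset_iff.mp hc).2 i hi]
  · exact (cycleFactorsFinset_pairwise_disjoint σ).mono' fun _ _ => Disjoint.disjoint_support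

theorem pairwise_disjoint_iff_injOn_support {C : Finset (Perm α)} (hC : ∀ c ∈ C, c.IsCycle) :
    (C : Set (Perm α)).Pairwise Disjoint ↔
      Set.InjOn support (C : Set (Perm α)) ∧
        (C.image support : Set (Finset α)).PairwiseDisjoint id := by
  have hsupp :
      (C : Set (Perm α)).Pairwise Disjoint ↔ (C : Set (Perm α)).PairwiseDisjoint support :=
    ⟨fun h => h.mono' fun _ _ => Disjoint.disjoint_support,
      fun h => h.mono' fun _ _ => disjoint_iff_disjoint_support.mpr⟩
  rw [coe_image, hsupp]
  constructor
  · intro h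
    have hinj : Set.InjOn support (C : Set (Perm α)) := fun c hc d hd hcd => by
      by_contra hne
      have := h hc hd hne
      rw [Function.onFun, hcd, disjoint_self_iff_empty] at this
      exact (hC d hd).nonempty_support.ne_empty this
    exact ⟨hinj, hinj.pairwiseDisjoint_image.mpr h⟩
  · rintro ⟨hinj, h⟩
    exact hinj.pairwiseDisjoint_image.mp h

theorem injOn_support_and_isPartition_image_iff {C : Finset (Perm α)}
    (hC : ∀ c ∈ C, c.IsCycle) (s : Finset α) :
    (Set.InjOn support (C : Set (Perm α)) ∧ (∀ B ∈ C.image support, 2 ≤ B.card) ∧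
        (C.image support : Set (Finset α)).PairwiseDisjoint id ∧
        (C.image support).biUnion id = s) ↔
      (C : Set (Perm α)).Pairwise Disjoint ∧ C.biUnion support = s := by
  have hcard : ∀ B ∈ C.image support, 2 ≤ B.card := by
    simp only [mem_image, forall_exists_index, and_imp]
    rintro B c hc rfl
    exact (hC c hc).two_le_card_support
  rw [pairwise_disjoint_iff_injOn_support hC, image_biUnion]
  exact ⟨fun ⟨hinj, _, hdisj, hcover⟩ => ⟨⟨hinj, hdisj⟩, hcover⟩,
    fun ⟨⟨hinj, hdisj⟩, hcover⟩ => ⟨hinj, hcard, hdisj, hcover⟩⟩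

theorem sum_filter_support_eq_comp_cycleFactorsFinset {M : Type*} [AddCommMonoid M]
    (s : Finset α) (G : Finset (Perm α) → M) :
    ∑ σ ∈ univ.filter (fun σ : Perm α => σ.support = s), G σ.cycleFactorsFinset =
      ∑ C ∈ (univ.filter IsCycle).powerset.filter
          (fun C : Finset (Perm α) =>
            (C : Set (Perm α)).Pairwise Disjoint ∧ C.biUnion support = s), G C := by
  refine sum_nbij cycleFactorsFinset ?_ cycleFactorsFinset_injective.injOn ?_ fun _ _ => rfl
  · intro σ hσ
    simp only [mem_filter, mem_univ, true_and, mem_powerset] at hσ ⊢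
    refine ⟨fun c hc => mem_filter.mpr ⟨mem_univ c, (mem_cycleFactorsFinset_iff.mp hc).1⟩,
      cycleFactorsFinset_pairwise_disjoint σ, ?_⟩
    rw [← support_eq_biUnion_cycleFactorsFinset, hσ]
  · intro C hC
    simp only [coe_filter, mem_powerset, subset_iff, mem_filter, mem_univ, true_and] at hC
    obtain ⟨hcyc, hdisj, hsupp⟩ := hC
    refine ⟨C.noncommProd id (hdisj.mono' fun _ _ => Disjoint.commute), ?_,
      cycleFactorsFinset_eq_finset.mpr ⟨hcyc, hdisj, rfl⟩⟩
    simp only [coe_filter, mem_univ, true_and]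
    exact (support_noncommProd (k := id) hdisj).trans hsupp

theorem IsCycle.intCast_sign {R : Type*} [Ring R] {c : Perm α} (hc : c.IsCycle) :
    ((Perm.sign c : ℤ) : R) = (-1) ^ (c.support.card + 1) := by
  rw [hc.sign]
  push_cast
  rw [pow_succ, mul_neg_one]

end Equiv.Perm

namespace Matrix
variable {n R : Type*} [Fintype n] [DecidableEq n] [CommRing R]

def signedSupportProd (A : Matrix n n R) (σ : Perm n) : R :=
  ((Perm.sign σ : ℤ) : R) * ∏ i ∈ σ.support, A i (σ i)

theorem signedSupportProd_eq_prod_cycleFactorsFinset (A : Matrix n n R) (σ : Perm n) :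
    A.signedSupportProd σ = ∏ c ∈ σ.cycleFactorsFinset, A.signedSupportProd c := by
  rw [signedSupportProd, Perm.sign_eq_prod_cycleFactorsFinset,
    Perm.prod_support_eq_prod_cycleFactorsFinset σ A]
  push_cast
  exact prod_mul_distrib.symm

theorem _root_.Equiv.Perm.IsCycle.signedSupportProd (A : Matrix n n R) {c : Perm n}
    (hc : c.IsCycle) :
    A.signedSupportProd c = (-1) ^ (c.support.card + 1) * ∏ i ∈ c.support, A i (c i) := by
  rw [Matrix.signedSupportProd, hc.intCast_sign]

theorem det_eq_sum_signedSupportProd_of_diag_eq_zero {A : Matrix n n R} (hA : ∀ i, A i i = 0) :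
    A.det =
      ∑ σ ∈ univ.filter (fun σ : Perm n => σ.support = univ), A.signedSupportProd σ := by
  have hterm (σ : Perm n) (hσ : σ ∈ univ.filter (fun σ : Perm n => σ.support = univ)) :
      A.signedSupportProd σ = ((Perm.sign σ : ℤ) : R) * ∏ i, A i (σ i) := by
    rw [signedSupportProd, (mem_filter.mp hσ).2]
  rw [sum_congr rfl hterm, sum_filter_of_ne, ← det_transpose, det_apply']
  · rfl
  · intro σ _ h
    contrapose! h
    obtain ⟨i, hi⟩ : ∃ i, i ∉ σ.support := by simpa [eq_univ_iff_forall] using h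
    exact mul_eq_zero_of_right _ (prod_eq_zero (mem_univ i) (by rw [Perm.notMem_support.mp hi, hA]))

end Matrix

theorem det_zero_diagonal_cycle_expansion_general {R : Type*} [CommRing R]
    (K : ℕ) (A : Matrix (Fin K) (Fin K) R)
    (hA : ∀ i, A i i = 0) :
    A.det =
      ∑ P ∈ Finset.univ.filter (fun P : Finset (Finset (Fin K)) =>
          (∀ B ∈ P, 2 ≤ B.card) ∧
          (P : Set (Finset (Fin K))).PairwiseDisjoint id ∧
          P.biUnion id = Finset.univ),
        ∏ B ∈ P,
          ((-1 : R) ^ (B.card + 1) *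
            ∑ σ ∈ Finset.univ.filter
                (fun σ : Equiv.Perm (Fin K) => σ.IsCycle ∧ σ.support = B),
              ∏ i ∈ B, A i (σ i)) := by
  have hblock (B : Finset (Fin K)) :
      (-1 : R) ^ (B.card + 1) *
          ∑ σ ∈ univ.filter (fun σ : Perm (Fin K) => σ.IsCycle ∧ σ.support = B),
            ∏ i ∈ B, A i (σ i) =
        ∑ c ∈ univ.filter IsCycle with c.support = B, A.signedSupportProd c := by
    rw [filter_filter, mul_sum]
    refine sum_congr rfl fun c hc => ?_
    obtain ⟨hcyc, rfl⟩ := (mem_filter.mp hc).2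
    rw [hcyc.signedSupportProd]
  rw [sum_congr rfl fun P _ => prod_congr rfl fun B _ => hblock B,
    sum_prod_sum_filter_eq_sum_powerset_injOn, det_eq_sum_signedSupportProd_of_diag_eq_zero hA]
  rw [sum_congr rfl fun σ _ => A.signedSupportProd_eq_prod_cycleFactorsFinset σ,
    sum_filter_support_eq_comp_cycleFactorsFinset univ fun C => ∏ c ∈ C, A.signedSupportProd c]
  refine sum_congr (filter_congr fun C hC => ?_) fun _ _ => rfl
  have hcyc : ∀ c ∈ C, c.IsCycle := fun c hc => (mem_filter.mp (mem_powerset.mp hC hc)).2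
  simp only [mem_filter, mem_univ, true_and]
  exact (injOn_support_and_isPartition_image_iff hcyc univ).symm

/-- for a K×K matrix `A` with zero diagonal over a commutative ring,
`det A = Σ_π Π_{B ∈ π} ( (−1)^{|B|+1} Σ_σ Π_{i ∈ B} A_{i,σ(i)} )`, where the outer sum
is over set partitions `π` of `{1,…,K}` all of whose blocks have at least two elements,
and the inner sum is over permutations that are cyclic on the block `B` (i.e. cycles
with support exactly `B`). -/
theorem det_zero_diagonal_cycle_expansion {R : Type*} [CommRing R]
    (K : ℕ) (hK : 1 ≤ K) (A : Matrix (Fin K) (Fin K) R)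
    (hA : ∀ i, A i i = 0) :
    A.det =
      ∑ P ∈ Finset.univ.filter (fun P : Finset (Finset (Fin K)) =>
          (∀ B ∈ P, 2 ≤ B.card) ∧
          (P : Set (Finset (Fin K))).PairwiseDisjoint id ∧
          P.biUnion id = Finset.univ),
        ∏ B ∈ P,
          ((-1 : R) ^ (B.card + 1) *
            ∑ σ ∈ Finset.univ.filter
                (fun σ : Equiv.Perm (Fin K) => σ.IsCycle ∧ σ.support = B),
              ∏ i ∈ B, A i (σ i)) :=
  det_zero_diagonal_cycle_expansion_general K A hA
end

section
/- Let ι be a finite type and let m be a function assigning to every nonempty subset S ⊆ ι a complex number. Then there exists a unique function κ, assigning to every nonempty subset of ι a complex number, such that for every nonempty S ⊆ ι one has m(S) = Σ_π Π_{B ∈ π} κ(B), where the sum runs over all set partitions π of S and the product over the blocks B of π. -/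
open scoped Classical

/-- The finite set of set partitions of a finite set `S` (as a `Finset` of blocks):
pairwise disjoint nonempty subsets of `S` whose union is `S`. -/
noncomputable def setPartitions {ι : Type*} [Fintype ι] [DecidableEq ι] (S : Finset ι) :
    Finset (Finset (Finset ι)) :=
  Finset.univ.filter (fun P : Finset (Finset ι) =>
    (∀ B ∈ P, B.Nonempty) ∧
    (P : Set (Finset ι)).PairwiseDisjoint id ∧
    P.biUnion id = S)

lemma mem_setPartitions_iff {ι : Type*} [Fintype ι] [DecidableEq ι] {S : Finset ι}
    {P : Finset (Finset ι)} :
    P ∈ setPartitions S ↔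
      (∀ B ∈ P, B.Nonempty) ∧ (P : Set (Finset ι)).PairwiseDisjoint id ∧
        P.biUnion id = S := by
  simp [setPartitions]

lemma singleton_mem_setPartitions {ι : Type*} [Fintype ι] [DecidableEq ι] {S : Finset ι}
    (hS : S.Nonempty) : ({S} : Finset (Finset ι)) ∈ setPartitions S := by
  rw [mem_setPartitions_iff]
  refine ⟨by simpa using hS, ?_, by simp⟩
  simp [Set.PairwiseDisjoint, Set.Pairwise]

lemma block_subset {ι : Type*} [Fintype ι] [DecidableEq ι] {S : Finset ι}
    {P : Finset (Finset ι)} (hP : P ∈ setPartitions S) {B : Finset ι} (hB : B ∈ P) :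
    B ⊆ S := by
  rw [mem_setPartitions_iff] at hP
  intro x hx
  rw [← hP.2.2]
  exact Finset.mem_biUnion.2 ⟨B, hB, hx⟩

lemma block_card_lt {ι : Type*} [Fintype ι] [DecidableEq ι] {S : Finset ι}
    {P : Finset (Finset ι)} (hP : P ∈ setPartitions S) (hne : P ≠ {S})
    {B : Finset ι} (hB : B ∈ P) : B.card < S.card := by
  have hsub := block_subset hP hB
  rcases mem_setPartitions_iff.1 hP with ⟨hnonemp, hdisj, hunion⟩
  have hBS : B ≠ S := by
    intro h
    subst h
    apply hne
    apply Finset.eq_singleton_iff_unique_mem.2 ⟨hB, ?_⟩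
    intro B' hB'
    by_contra hne'
    have hd : Disjoint B' B := hdisj hB' hB hne'
    rcases hnonemp B' hB' with ⟨x, hx⟩
    exact (Finset.disjoint_left.1 hd hx) (block_subset hP hB' hx)
  exact Finset.card_lt_card (ssubset_of_subset_of_ne hsub hBS)

noncomputable def kappa {ι : Type*} [Fintype ι] [DecidableEq ι] (m : Finset ι → ℂ)
    (S : Finset ι) : ℂ :=
  m S - ∑ P ∈ ((setPartitions S).erase {S}).attach,
      ∏ B ∈ P.1.attach, kappa m B.1
termination_by S.card
decreasing_by
  exact block_card_lt (Finset.mem_of_mem_erase P.2) (Finset.ne_of_mem_erase P.2) B.2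

lemma kappa_spec {ι : Type*} [Fintype ι] [DecidableEq ι] (m : Finset ι → ℂ)
    (S : Finset ι) :
    kappa m S = m S - ∑ P ∈ (setPartitions S).erase {S}, ∏ B ∈ P, kappa m B := by
  rw [kappa]
  congr 1
  rw [← Finset.sum_attach ((setPartitions S).erase {S}) (fun P => ∏ B ∈ P, kappa m B)]
  exact Finset.sum_congr rfl fun P _ => Finset.prod_attach _ _

lemma kappa_moment {ι : Type*} [Fintype ι] [DecidableEq ι] (m : Finset ι → ℂ)
    (S : Finset ι) (hS : S.Nonempty) :
    m S = ∑ P ∈ setPartitions S, ∏ B ∈ P, kappa m B := by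
  rw [← Finset.add_sum_erase _ _ (singleton_mem_setPartitions hS),
    Finset.prod_singleton, kappa_spec]
  ring

/-- given joint moments `m` (a complex number for each nonempty subset of a
finite index type `ι`), there exists a unique family of joint cumulants `κ` on nonempty
subsets satisfying the moment–cumulant relation `m(S) = Σ_π Π_{B ∈ π} κ(B)` for every
nonempty `S`, the sum running over set partitions `π` of `S`. -/
theorem cumulants_exist_unique {ι : Type*} [Fintype ι] [DecidableEq ι]
    (m : Finset ι → ℂ) :
    ∃ κ : Finset ι → ℂ,
      (∀ S : Finset ι, S.Nonempty →
        m S = ∑ P ∈ setPartitions S, ∏ B ∈ P, κ B) ∧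
      ∀ κ' : Finset ι → ℂ,
        (∀ S : Finset ι, S.Nonempty →
          m S = ∑ P ∈ setPartitions S, ∏ B ∈ P, κ' B) →
        ∀ S : Finset ι, S.Nonempty → κ' S = κ S := by
  refine ⟨kappa m, kappa_moment m, ?_⟩
  intro κ' hκ' S
  induction S using Finset.strongInduction with
  | _ S ih =>
    intro hS
    have h1 := hκ' S hS
    have h2 := kappa_moment m S hS
    rw [← Finset.add_sum_erase _ _ (singleton_mem_setPartitions hS),
      Finset.prod_singleton] at h1 h2
    have hsum : ∑ P ∈ (setPartitions S).erase {S}, ∏ B ∈ P, κ' B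
        = ∑ P ∈ (setPartitions S).erase {S}, ∏ B ∈ P, kappa m B := by
      refine Finset.sum_congr rfl fun P hP => Finset.prod_congr rfl fun B hB => ?_
      have hPm := Finset.mem_of_mem_erase hP
      have hBne : B ≠ S := by
        intro h
        exact absurd (h ▸ block_card_lt hPm (Finset.ne_of_mem_erase hP) hB)
          (Nat.lt_irrefl _)
      have hBsub : B ⊂ S := ssubset_of_subset_of_ne (block_subset hPm hB) hBne
      exact ih B hBsub ((mem_setPartitions_iff.1 hPm).1 B hB)
    have := h1.symm.trans h2
    rw [hsum] at this
    exact add_right_cancel this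
end

section
/- Let V ⊆ ℂ be an open set invariant under complex conjugation (z ∈ V ⟺ conj(z) ∈ V), and set V⁺ = { z ∈ V : Im z > 0 } and I = V ∩ ℝ. Suppose f : ℂ → ℂ is complex-differentiable on V⁺, continuous on V⁺ ∪ I, and satisfies Im f(x) = 0 for every x ∈ I. Then the function g defined by g(z) = f(z) for z ∈ V with Im z ≥ 0 and g(z) = conj(f(conj z)) for z ∈ V with Im z < 0 is complex-differentiable (holomorphic) on all of V and agrees with f on V⁺ ∪ I. -/
/-!
Off the real axis the reflected function is `f` or `conj ∘ f ∘ conj`, hence holomorphic, and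
since `f` is real on the axis the two pieces glue to a continuous function on `V`. A continuous
function that is holomorphic off a line is holomorphic: by Cauchy–Goursat its integral over a
rectangle that does not cross the line vanishes (the line meets only the boundary), a rectangle
crossing the line is the union of two such, and Morera's theorem applies.
-/

open Complex ComplexConjugate Set
open scoped Interval

variable {E : Type*} [NormedAddCommGroup E] [NormedSpace ℂ E]

noncomputable def rectBoundaryIntegral (f : ℂ → E) (z w : ℂ) : E :=
  (∫ x : ℝ in z.re..w.re, f (x + z.im * I)) - (∫ x : ℝ in z.re..w.re, f (x + w.im * I)) +
    I • (∫ y : ℝ in z.im..w.im, f (w.re + y * I)) - I • ∫ y : ℝ in z.im..w.im, f (z.re + y * I)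

theorem rectBoundaryIntegral_eq_add_of_mem_uIcc {f : ℂ → E} {z w : ℂ} {t : ℝ}
    (hf : ContinuousOn f (Rectangle z w)) (ht : t ∈ [[z.im, w.im]]) :
    rectBoundaryIntegral f z w =
      rectBoundaryIntegral f z (w.re + t * I) + rectBoundaryIntegral f (z.re + t * I) w := by
  have vertical {a : ℝ} (ha : a ∈ [[z.re, w.re]]) {b c : ℝ} (hbc : [[b, c]] ⊆ [[z.im, w.im]]) :
      IntervalIntegrable (fun y : ℝ ↦ f (a + y * I)) MeasureTheory.volume b c :=
    (hf.comp (by fun_prop) fun y hy ↦ by simpa [Rectangle, mem_reProdIm] using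
      ⟨ha, hbc hy⟩).intervalIntegrable
  have hzt := uIcc_subset_uIcc_left ht
  have htw := uIcc_subset_uIcc_right ht
  simp only [rectBoundaryIntegral, add_re, ofReal_re, mul_re, I_re, mul_zero, ofReal_im, I_im,
    mul_one, sub_self, add_zero, add_im, mul_im, zero_add]
  rw [← intervalIntegral.integral_add_adjacent_intervals (vertical right_mem_uIcc hzt)
      (vertical right_mem_uIcc htw),
    ← intervalIntegral.integral_add_adjacent_intervals (vertical left_mem_uIcc hzt)
      (vertical left_mem_uIcc htw)]
  module

theorem rectBoundaryIntegral_eq_zero_of_zero_notMem [CompleteSpace E] {f : ℂ → E} {z w : ℂ}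
    (hc : ContinuousOn f (Rectangle z w))
    (hd : ∀ u ∈ Rectangle z w, u.im ≠ 0 → DifferentiableAt ℂ f u)
    (h0 : (0 : ℝ) ∉ Ioo (min z.im w.im) (max z.im w.im)) :
    rectBoundaryIntegral f z w = 0 :=
  integral_boundary_rect_eq_zero_of_differentiable_on_off_countable f z w ∅ countable_empty hc
    fun u ⟨hu, _⟩ ↦
      hd u (reProdIm_subset_iff.2 (prod_mono Ioo_subset_Icc_self Ioo_subset_Icc_self) hu)
        fun h ↦ h0 (h ▸ (mem_reProdIm.1 hu).2)

theorem rectBoundaryIntegral_eq_zero [CompleteSpace E] {f : ℂ → E} {z w : ℂ}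
    (hc : ContinuousOn f (Rectangle z w))
    (hd : ∀ u ∈ Rectangle z w, u.im ≠ 0 → DifferentiableAt ℂ f u) :
    rectBoundaryIntegral f z w = 0 := by
  by_cases h0 : (0 : ℝ) ∉ Ioo (min z.im w.im) (max z.im w.im)
  · exact rectBoundaryIntegral_eq_zero_of_zero_notMem hc hd h0
  rw [not_not] at h0
  have h0' : (0 : ℝ) ∈ [[z.im, w.im]] := Ioo_subset_Icc_self h0
  have hlow : Rectangle z (w.re + (0 : ℝ) * I) ⊆ Rectangle z w := by
    simpa [Rectangle] using
      reProdIm_subset_iff.2 (prod_mono subset_rfl (uIcc_subset_uIcc_left h0'))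
  have hhigh : Rectangle (z.re + (0 : ℝ) * I) w ⊆ Rectangle z w := by
    simpa [Rectangle] using
      reProdIm_subset_iff.2 (prod_mono subset_rfl (uIcc_subset_uIcc_right h0'))
  rw [rectBoundaryIntegral_eq_add_of_mem_uIcc hc h0',
    rectBoundaryIntegral_eq_zero_of_zero_notMem (hc.mono hlow) (fun u hu ↦ hd u (hlow hu)) ?_,
    rectBoundaryIntegral_eq_zero_of_zero_notMem (hc.mono hhigh) (fun u hu ↦ hd u (hhigh hu)) ?_,
    add_zero]
  all_goals simpa using le_of_lt

theorem differentiableOn_of_differentiableAt_im_ne_zero [CompleteSpace E] {f : ℂ → E}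
    {U : Set ℂ} (hU : IsOpen U) (hc : ContinuousOn f U)
    (hd : ∀ z ∈ U, z.im ≠ 0 → DifferentiableAt ℂ f z) :
    DifferentiableOn ℂ f U := by
  refine (isConservativeOn_and_continuousOn_iff_isDifferentiableOn hU).1 ⟨fun z w hzw ↦ ?_, hc⟩
  rw [← add_eq_zero_iff_eq_neg, wedgeIntegral_add_wedgeIntegral_eq]
  exact rectBoundaryIntegral_eq_zero (hc.mono hzw) fun u hu ↦ hd u (hzw hu)

noncomputable def schwarzReflection (f : ℂ → ℂ) (z : ℂ) : ℂ :=
  if 0 ≤ z.im then f z else conj (f (conj z))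

theorem schwarzReflection_of_im_nonneg {f : ℂ → ℂ} {z : ℂ} (hz : 0 ≤ z.im) :
    schwarzReflection f z = f z :=
  if_pos hz

theorem continuousOn_schwarzReflection {f : ℂ → ℂ} {V : Set ℂ}
    (hVconj : ∀ z, z ∈ V ↔ conj z ∈ V) (hfc : ContinuousOn f {z ∈ V | 0 ≤ z.im})
    (hfre : ∀ z ∈ V, z.im = 0 → (f z).im = 0) :
    ContinuousOn (schwarzReflection f) V := by
  refine ContinuousOn.if (fun z ⟨hzV, hz⟩ ↦ ?_) ?_ ?_
  · rw [frontier_setOfPred_le_im] at hz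
    rw [conj_eq_iff_im.2 hz, conj_eq_iff_im.2 (hfre z hzV hz)]
  · rwa [(isClosed_le continuous_const continuous_im).closure_eq]
  · simp_rw [not_le, closure_setOfPred_im_lt]
    exact continuous_conj.comp_continuousOn <| hfc.comp continuous_conj.continuousOn
      fun z ⟨hzV, hz⟩ ↦ ⟨(hVconj z).1 hzV, by simpa using hz⟩

theorem differentiableAt_schwarzReflection {f : ℂ → ℂ} {V : Set ℂ} (hV : IsOpen V)
    (hVconj : ∀ z, z ∈ V ↔ conj z ∈ V) (hf : DifferentiableOn ℂ f {z ∈ V | 0 < z.im})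
    {z : ℂ} (hzV : z ∈ V) (hz : z.im ≠ 0) :
    DifferentiableAt ℂ (schwarzReflection f) z := by
  have hupper : IsOpen {z ∈ V | 0 < z.im} := hV.inter (isOpen_lt continuous_const continuous_im)
  rcases hz.lt_or_gt with hneg | hpos
  · have hconj : DifferentiableAt ℂ f (conj z) :=
      hf.differentiableAt (hupper.mem_nhds ⟨(hVconj z).1 hzV, by simpa using hneg⟩)
    refine (differentiableAt_conj_conj_iff.2 hconj).congr_of_eventuallyEq ?_
    filter_upwards [continuous_im.continuousAt.eventually_lt_const hneg] with w hw
    exact if_neg hw.not_ge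
  · refine (hf.differentiableAt (hupper.mem_nhds ⟨hzV, hpos⟩)).congr_of_eventuallyEq ?_
    filter_upwards [continuous_im.continuousAt.eventually_const_lt hpos] with w hw
    exact if_pos hw.le

/-- Schwarz reflection, real boundary values: let `V ⊆ ℂ` be open and
invariant under conjugation, `V⁺ = {z ∈ V | Im z > 0}` and `I = V ∩ ℝ`. If `f` is
holomorphic on `V⁺`, continuous on `V⁺ ∪ I`, and `Im f = 0` on `I`, then the function
`g` equal to `f` on the closed upper part of `V` and to `conj (f (conj z))` on the lower
part is holomorphic on all of `V` and agrees with `f` on `V⁺ ∪ I`. -/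
theorem schwarz_reflection_real (V : Set ℂ) (hV : IsOpen V)
    (hVconj : ∀ z : ℂ, z ∈ V ↔ (starRingEnd ℂ) z ∈ V)
    (f : ℂ → ℂ)
    (hf : DifferentiableOn ℂ f {z ∈ V | 0 < z.im})
    (hfc : ContinuousOn f ({z ∈ V | 0 < z.im} ∪ {z ∈ V | z.im = 0}))
    (hfre : ∀ z ∈ {z ∈ V | z.im = 0}, (f z).im = 0) :
    DifferentiableOn ℂ
        (fun z => if 0 ≤ z.im then f z else (starRingEnd ℂ) (f ((starRingEnd ℂ) z))) V ∧
      ∀ z ∈ ({z ∈ V | 0 < z.im} ∪ {z ∈ V | z.im = 0}),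
        (fun z => if 0 ≤ z.im then f z else (starRingEnd ℂ) (f ((starRingEnd ℂ) z))) z
          = f z := by
  have hclosedUpper : {z ∈ V | 0 < z.im} ∪ {z ∈ V | z.im = 0} = {z ∈ V | 0 ≤ z.im} := by
    ext z
    simp [le_iff_lt_or_eq, eq_comm, and_or_left]
  rw [hclosedUpper] at hfc ⊢
  refine ⟨differentiableOn_of_differentiableAt_im_ne_zero hV
    (continuousOn_schwarzReflection hVconj hfc fun z hzV hz ↦ hfre z ⟨hzV, hz⟩)
    fun z hzV hz ↦ differentiableAt_schwarzReflection hV hVconj hf hzV hz,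
    fun z ⟨_, hz⟩ ↦ schwarzReflection_of_im_nonneg hz⟩
end
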